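/- Every Floyd–Auslander system (X,T) is topologically conjugate to a Floyd–Auslander system (X̃,T̃) (over a possibly different odometer, with data (p̃_n) and (λ̃_j^n)) satisfying 1 ≤ |Q̃(n)| < p̃_n for all n ∈ ℕ, where Q̃(n) = {j ∈ [p̃_n] : λ̃_j^n = λ₁}; that is, there is a homeomorphism h : X̃ → X with h ∘ T̃ = T ∘ h. -/

import Mathlib

open Filter Topology

noncomputable section

def lam0 : ℝ → ℝ := fun x => x / 2
def lam1 : ℝ → ℝ := fun x => x
def lam2 : ℝ → ℝ := fun x => x / 2 + 1 / 2

/-- The defining data of a Floyd–Auslander construction: a sequence `p` of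
integers `≥ 2` and, for each `n` and `j ∈ [p n]`, a map `lam n j` which is one
of `lam0, lam1, lam2`. -/
structure FAData where
  p : ℕ → ℕ
  hp : ∀ n, 2 ≤ p n
  lam : (n : ℕ) → Fin (p n) → ℝ → ℝ
  hlam : ∀ n j, lam n j = lam0 ∨ lam n j = lam1 ∨ lam n j = lam2

namespace FAData

variable (D : FAData)

abbrev Sigma : Type := ∀ n, Fin (D.p n)

def fin0 (n : ℕ) : Fin (D.p n) := ⟨0, by have := D.hp n; omega⟩

def finTop (n : ℕ) : Fin (D.p n) := ⟨D.p n - 1, by have := D.hp n; omega⟩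

/-- Addition mod `p n`, as an element of `Fin (p n)`. -/
def modAdd (n : ℕ) (a b : ℕ) : Fin (D.p n) :=
  ⟨(a + b) % D.p n, Nat.mod_lt _ (by have := D.hp n; omega)⟩

def Q (n : ℕ) : Set (Fin (D.p n)) := {j | D.lam n j = lam1}
def H0 (n : ℕ) : Set (Fin (D.p n)) := {j | D.lam n j = lam0}
def H2 (n : ℕ) : Set (Fin (D.p n)) := {j | D.lam n j = lam2}

/-- The carry entering position `n` when adding `1̲ = 10^∞` to `α`. -/
def carryIn (α : D.Sigma) : ℕ → ℕ
  | 0 => 1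
  | n + 1 => if D.p n ≤ (α n).val + carryIn α n then 1 else 0

/-- The odometer add-one map `α ↦ α + 1̲`. -/
def addOne (α : D.Sigma) : D.Sigma := fun n => D.modAdd n (α n).val (D.carryIn α n)

/-- `lamComp α n = λ¹_{α₁} ∘ … ∘ λⁿ_{α_n}` (with `lamComp α 0 = id`). -/
def lamComp (α : D.Sigma) : ℕ → ℝ → ℝ
  | 0 => id
  | n + 1 => lamComp α n ∘ D.lam n (α n)

/-- The space `X ⊆ Σ × ℝ` of the Floyd–Auslander construction. -/
def X : Set (D.Sigma × ℝ) :=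
  {q | ∃ z ∈ Set.Icc (0 : ℝ) 1, Tendsto (fun n => D.lamComp q.1 n z) atTop (𝓝 q.2)}

/-- The fibre `L_α = ({α} × [0,1]) ∩ X`. -/
def Lfib (α : D.Sigma) : Set (D.Sigma × ℝ) := {q ∈ D.X | q.1 = α}

/-- A fibre `L_α` is maximal if the length (diameter) of `π₂(L_α)` is maximal. -/
def IsMaximalFiber (α : D.Sigma) : Prop :=
  ∀ β : D.Sigma, Metric.diam (Prod.snd '' D.Lfib β) ≤ Metric.diam (Prod.snd '' D.Lfib α)

/-- A convenient subset `𝒜 ⊆ Σ`. -/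
def Convenient (𝒜 : Set D.Sigma) : Prop :=
  ¬𝒜.Countable ∧ (∀ α ∈ 𝒜, D.IsMaximalFiber α) ∧
    ∃ q k k' : ℕ → ℕ, StrictMono q ∧ StrictMono k ∧ StrictMono k' ∧
      (∀ ℓ, ∃ ξ1 ξ2 : Fin (D.p (q ℓ)), ξ1 ∈ D.Q (q ℓ) ∧ ξ2 ∈ D.Q (q ℓ) ∧ ξ1 < ξ2 ∧
        ∀ α ∈ 𝒜, α (q ℓ) = ξ1) ∧
      (∀ ℓ, (D.H2 (k ℓ)).Nonempty ∧ ∃ ζ ∈ D.Q (k ℓ), ∀ α ∈ 𝒜, α (k ℓ) = ζ) ∧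
      (∀ ℓ, (D.H0 (k' ℓ)).Nonempty ∧ ∃ ζ ∈ D.Q (k' ℓ), ∀ α ∈ 𝒜, α (k' ℓ) = ζ)

/-- Condition (A). -/
def CondA : Prop :=
  ∃ ns : ℕ → ℕ, StrictMono ns ∧ ∀ ℓ, 2 ≤ (D.Q (ns ℓ)).ncard ∧
    ∃ a0 a1 : Fin (D.p (ns ℓ)), a0 ∈ D.Q (ns ℓ) ∧ a1 ∈ D.Q (ns ℓ) ∧ a0 ≠ a1 ∧
      ∃ Δ : Fin (D.p (ns ℓ)),
        D.modAdd (ns ℓ) a0.val Δ.val ∈ D.H0 (ns ℓ) ∧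
        D.modAdd (ns ℓ) a1.val Δ.val ∈ D.H2 (ns ℓ)

/-- Condition (B). -/
def CondB : Prop :=
  ∃ ns : ℕ → ℕ, StrictMono ns ∧ ∀ ℓ, 2 ≤ (D.Q (ns ℓ)).ncard ∧
    ∀ a0 a1 : Fin (D.p (ns ℓ)), a0 ∈ D.Q (ns ℓ) → a1 ∈ D.Q (ns ℓ) → a0 ≠ a1 →
      ∀ j : Fin (D.p (ns ℓ)),
        (D.modAdd (ns ℓ) a0.val j.val ∈ D.H0 (ns ℓ) ↔
          D.modAdd (ns ℓ) a1.val j.val ∈ D.H0 (ns ℓ)) ∧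
        (D.modAdd (ns ℓ) a0.val j.val ∈ D.H2 (ns ℓ) ↔
          D.modAdd (ns ℓ) a1.val j.val ∈ D.H2 (ns ℓ))

/-- Condition (C). -/
def CondC : Prop :=
  ∃ ns : ℕ → ℕ, StrictMono ns ∧ ∀ ℓ, 2 ≤ (D.Q (ns ℓ)).ncard ∧
    ∃ a0 a1 : Fin (D.p (ns ℓ)), a0 ∈ D.Q (ns ℓ) ∧ a1 ∈ D.Q (ns ℓ) ∧ a0 ≠ a1 ∧
      ∃ Δ : Fin (D.p (ns ℓ)), ∃ h : a0.val + Δ.val < D.p (ns ℓ),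
        (⟨a0.val + Δ.val, h⟩ : Fin (D.p (ns ℓ))) ∈ D.Q (ns ℓ) ∧
        D.modAdd (ns ℓ) a1.val Δ.val ∈ D.H0 (ns ℓ) ∪ D.H2 (ns ℓ)

end FAData

/-- A Floyd–Auslander system: the data of the construction together with the
skew-product map `T`, the continuity conditions (i) and the condition (ii) that
`Q n = ∅` for at most finitely many `n`. -/
structure FASystem extends FAData where
  T : toFAData.X → toFAData.X
  hT : ∀ (α : toFAData.Sigma) (z y y' : ℝ), z ∈ Set.Icc (0 : ℝ) 1 →
    Tendsto (fun n => toFAData.lamComp α n z) atTop (𝓝 y) →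
    Tendsto (fun n => toFAData.lamComp (toFAData.addOne α) n z) atTop (𝓝 y') →
    ∀ hq : (α, y) ∈ toFAData.X,
      (T ⟨(α, y), hq⟩ : toFAData.Sigma × ℝ) = (toFAData.addOne α, y')
  infLeft : {n : ℕ | toFAData.lam n (toFAData.fin0 n) = lam0 ∨
      toFAData.lam n (toFAData.fin0 n) = lam2}.Infinite
  infRight : {n : ℕ | toFAData.lam n (toFAData.finTop n) = lam0 ∨
      toFAData.lam n (toFAData.finTop n) = lam2}.Infinite
  Qfin : {n : ℕ | toFAData.Q n = ∅}.Finite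

namespace FASystem

variable (S : FASystem)

/-- The (forward) Ellis semigroup `E(X)`: the closure of `{Tⁿ : n ≥ 1}` in `X^X`. -/
def Ellis : Set (S.toFAData.X → S.toFAData.X) :=
  closure (Set.range fun n : ℕ => S.T^[n + 1])

/-- The set of idempotents `J(X)` of the Ellis semigroup. -/
def J : Set (S.toFAData.X → S.toFAData.X) := {f | f ∈ S.Ellis ∧ f ∘ f = f}

/-- The set of minimal idempotents `J^min(X)` (minimal for `e ≤ f ↔ e = e ∘ f`). -/
def Jmin : Set (S.toFAData.X → S.toFAData.X) :=
  {f | f ∈ S.J ∧ ∀ e ∈ S.J, e = e ∘ f → e = f}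

/-- `(X,T)` is minimal: every forward orbit is dense. -/
def Minimal : Prop := ∀ x : S.toFAData.X, Dense (Set.range fun n : ℕ => S.T^[n] x)

/-- Property (∗). -/
def PropertyStar : Prop :=
  ∃ a ∈ Set.Ioo (0 : ℝ) 1, ∃ 𝒜 : Set S.toFAData.Sigma, S.toFAData.Convenient 𝒜 ∧
    ((∀ B ⊆ 𝒜, ∃ f ∈ S.J, ∃ B1 B2 : Set S.toFAData.Sigma, B1 ∪ B2 = B ∧ Disjoint B1 B2 ∧
        (∀ α ∈ 𝒜 \ B, ∃ b ∈ Set.Icc (0 : ℝ) a, ∀ q : S.toFAData.X,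
          (q : S.toFAData.Sigma × ℝ).1 = α → (f q : S.toFAData.Sigma × ℝ) = (α, b)) ∧
        (∀ α ∈ B1, ∃ c : ℝ, a < c ∧ ∀ q : S.toFAData.X,
          (q : S.toFAData.Sigma × ℝ).1 = α → (f q : S.toFAData.Sigma × ℝ) = (α, c)) ∧
        (∀ α ∈ B2, ∀ q : S.toFAData.X, (q : S.toFAData.Sigma × ℝ).1 = α → f q = q)) ∨
     (∀ B ⊆ 𝒜, ∃ f ∈ S.J, ∃ B1 B2 : Set S.toFAData.Sigma, B1 ∪ B2 = B ∧ Disjoint B1 B2 ∧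
        (∀ α ∈ 𝒜 \ B, ∃ b ∈ Set.Icc a (1 : ℝ), ∀ q : S.toFAData.X,
          (q : S.toFAData.Sigma × ℝ).1 = α → (f q : S.toFAData.Sigma × ℝ) = (α, b)) ∧
        (∀ α ∈ B1, ∃ c : ℝ, c < a ∧ ∀ q : S.toFAData.X,
          (q : S.toFAData.Sigma × ℝ).1 = α → (f q : S.toFAData.Sigma × ℝ) = (α, c)) ∧
        (∀ α ∈ B2, ∀ q : S.toFAData.X, (q : S.toFAData.Sigma × ℝ).1 = α → f q = q)))

end FASystem

/-!
Each `λ_α^n` is an increasing affine map of `[0,1]` into itself, so the intervals `λ_α^n([0,1])`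
are nested, `λ_α^n(z)` converges for every `z`, and each fibre of `X` is the image of `[0,1]` under
the limit map. A homeomorphism of odometers commuting with `+1̲` that is affine on fibres therefore
conjugates the corresponding systems, and two such changes of data suffice.

First, at the finitely many levels with `Q(n) = ∅` all maps become `λ₁`; beyond some level `E`
the data agree, so the old and new limit maps differ by the affine map sending the new `λ_α^E` to
the old one, which depends continuously on `α`. Now every `Q(n)` is nonempty. Second, each run of
levels with `Q(n) = [p_n]` is merged with the next level (which has a map other than `λ₁`) into a
single level whose digits are read in mixed radix and whose map is that of the top digit. Since
the merged levels contribute `λ₁ = id`, this leaves `λ_α^n` unchanged at block boundaries. The two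
odometers are matched through the values `∑_{m<n} α_m p₀ ⋯ p_{m-1}` of initial segments, on which
`+1̲` acts as `+1`.
-/

open Set

namespace FAData

lemma lam0_ne_lam1 : lam0 ≠ lam1 := fun h => by simpa [lam0, lam1] using congrFun h 1

lemma lam2_ne_lam1 : lam2 ≠ lam1 := fun h => by simpa [lam2, lam1] using congrFun h 0

variable (D : FAData)

lemma Q_ne_univ_of_lam_ne_lam1 {n : ℕ} {j : Fin (D.p n)}
    (h : D.lam n j = lam0 ∨ D.lam n j = lam2) : D.Q n ≠ univ := fun hQ => by
  have hj : D.lam n j = lam1 := (hQ ▸ mem_univ j : j ∈ D.Q n)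
  rcases h with h | h
  exacts [lam0_ne_lam1 (h.symm.trans hj), lam2_ne_lam1 (h.symm.trans hj)]

section Affine

lemma lam_strictMono (n : ℕ) (j : Fin (D.p n)) : StrictMono (D.lam n j) := by
  intro x y hxy
  rcases D.hlam n j with h | h | h <;> simp only [h, lam0, lam1, lam2] <;> linarith

lemma lam_mapsTo (n : ℕ) (j : Fin (D.p n)) : MapsTo (D.lam n j) (Icc 0 1) (Icc 0 1) := by
  rintro x ⟨hx0, hx1⟩
  rcases D.hlam n j with h | h | h <;> simp only [h, lam0, lam1, lam2, mem_Icc] <;>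
    constructor <;> linarith

lemma lam_apply_eq (n : ℕ) (j : Fin (D.p n)) (z : ℝ) :
    D.lam n j z = (1 - z) * D.lam n j 0 + z * D.lam n j 1 := by
  rcases D.hlam n j with h | h | h <;> simp only [h, lam0, lam1, lam2] <;> ring

lemma lamComp_succ_apply (α : D.Sigma) (n : ℕ) (z : ℝ) :
    D.lamComp α (n + 1) z = D.lamComp α n (D.lam n (α n) z) := rfl

lemma lamComp_strictMono (α : D.Sigma) (n : ℕ) : StrictMono (D.lamComp α n) := by
  induction n with
  | zero => exact strictMono_id
  | succ n ih => exact ih.comp (D.lam_strictMono n (α n))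

lemma lamComp_mapsTo (α : D.Sigma) (n : ℕ) : MapsTo (D.lamComp α n) (Icc 0 1) (Icc 0 1) := by
  induction n with
  | zero => exact mapsTo_id _
  | succ n ih => exact ih.comp (D.lam_mapsTo n (α n))

lemma lamComp_apply_eq (α : D.Sigma) (n : ℕ) (z : ℝ) :
    D.lamComp α n z = (1 - z) * D.lamComp α n 0 + z * D.lamComp α n 1 := by
  induction n generalizing z with
  | zero => simp [lamComp]
  | succ n ih =>
    simp only [lamComp_succ_apply]
    rw [ih (D.lam n _ z), ih (D.lam n _ 0), ih (D.lam n _ 1), D.lam_apply_eq n _ z]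
    ring

lemma lamComp_eq_of_lam_eq_lam1 {α : D.Sigma} {a b : ℕ} (hab : a ≤ b)
    (h : ∀ m ∈ Ico a b, D.lam m (α m) = lam1) : D.lamComp α b = D.lamComp α a := by
  induction b, hab using Nat.le_induction with
  | base => rfl
  | succ b hab ih =>
    show D.lamComp α b ∘ D.lam b (α b) = _
    rw [h b ⟨hab, b.lt_succ_self⟩, ih fun m hm => h m ⟨hm.1, hm.2.trans b.lt_succ_self⟩]
    rfl

lemma continuous_lamComp (n : ℕ) (z : ℝ) : Continuous fun α : D.Sigma => D.lamComp α n z := by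
  induction n generalizing z with
  | zero => exact continuous_const
  | succ n ih =>
    have hw : Continuous fun α : D.Sigma => D.lam n (α n) z :=
      (continuous_of_discreteTopology (f := fun j => D.lam n j z)).comp (continuous_apply n)
    simp only [lamComp_succ_apply, D.lamComp_apply_eq _ n (D.lam n _ z)]
    exact ((continuous_const.sub hw).mul (ih 0)).add (hw.mul (ih 1))

def limPt (α : D.Sigma) (z : ℝ) : ℝ := limUnder atTop fun n => D.lamComp α n z

lemma tendsto_limPt (α : D.Sigma) (z : ℝ) :
    Tendsto (fun n => D.lamComp α n z) atTop (𝓝 (D.limPt α z)) := by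
  have hle : ∀ n, D.lamComp α n 0 ≤ D.lamComp α n 1 := fun n =>
    (D.lamComp_strictMono α n).monotone zero_le_one
  have hlo : Monotone fun n => D.lamComp α n 0 := monotone_nat_of_le_succ fun n =>
    (D.lamComp_strictMono α n).monotone (D.lam_mapsTo n (α n) ⟨le_rfl, zero_le_one⟩).1
  have hhi : Antitone fun n => D.lamComp α n 1 := antitone_nat_of_succ_le fun n =>
    (D.lamComp_strictMono α n).monotone (D.lam_mapsTo n (α n) ⟨zero_le_one, le_rfl⟩).2
  have h0 := tendsto_atTop_ciSup hlo ⟨1, by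
    rintro _ ⟨n, rfl⟩; exact (hle n).trans (D.lamComp_mapsTo α n ⟨zero_le_one, le_rfl⟩).2⟩
  have h1 := tendsto_atTop_ciInf hhi ⟨0, by
    rintro _ ⟨n, rfl⟩; exact (D.lamComp_mapsTo α n ⟨le_rfl, zero_le_one⟩).1.trans (hle n)⟩
  refine tendsto_nhds_limUnder ⟨(1 - z) * (⨆ n, D.lamComp α n 0) + z * ⨅ n, D.lamComp α n 1, ?_⟩
  simp only [D.lamComp_apply_eq α _ z]
  exact (h0.const_mul _).add (h1.const_mul _)

lemma mem_X_iff {q : D.Sigma × ℝ} : q ∈ D.X ↔ ∃ z ∈ Icc (0 : ℝ) 1, D.limPt q.1 z = q.2 :=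
  exists_congr fun z => and_congr_right fun _ =>
    ⟨fun h => tendsto_nhds_unique (D.tendsto_limPt q.1 z) h, fun h => h ▸ D.tendsto_limPt q.1 z⟩

lemma limPt_mem_X (α : D.Sigma) {z : ℝ} (hz : z ∈ Icc (0 : ℝ) 1) : (α, D.limPt α z) ∈ D.X :=
  D.mem_X_iff.2 ⟨z, hz, rfl⟩

end Affine

section Odometer

def place (n : ℕ) : ℕ := ∏ m ∈ Finset.range n, D.p m

def value (α : D.Sigma) (n : ℕ) : ℕ := ∑ m ∈ Finset.range n, (α m : ℕ) * D.place m

def ofNat (v : ℕ) : D.Sigma :=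
  fun m => ⟨v / D.place m % D.p m, Nat.mod_lt _ (by have := D.hp m; omega)⟩

lemma place_pos (n : ℕ) : 0 < D.place n :=
  Finset.prod_pos fun m _ => by have := D.hp m; omega

lemma place_succ (n : ℕ) : D.place (n + 1) = D.place n * D.p n := Finset.prod_range_succ _ _

lemma place_dvd_place {m n : ℕ} (h : m ≤ n) : D.place m ∣ D.place n :=
  Finset.prod_dvd_prod_of_subset _ _ _ (Finset.range_subset_range.2 h)

lemma value_succ (α : D.Sigma) (n : ℕ) : D.value α (n + 1) = D.value α n + α n * D.place n :=
  Finset.sum_range_succ _ _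

lemma value_lt_place (α : D.Sigma) (n : ℕ) : D.value α n < D.place n := by
  induction n with
  | zero => simp [value, place]
  | succ n ih =>
    rw [value_succ, place_succ]
    nlinarith [(α n).isLt]

lemma value_congr {α β : D.Sigma} {n : ℕ} (h : ∀ m < n, α m = β m) :
    D.value α n = D.value β n :=
  Finset.sum_congr rfl fun m hm => by rw [h m (Finset.mem_range.1 hm)]

lemma value_ofNat (v n : ℕ) : D.value (D.ofNat v) n = v % D.place n := by
  induction n with
  | zero => simp [value, place, Nat.mod_one]
  | succ n ih =>
    rw [value_succ, ih, place_succ, Nat.mod_mul, mul_comm]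
    rfl

lemma value_mod_place (α : D.Sigma) {m n : ℕ} (h : m ≤ n) :
    D.value α n % D.place m = D.value α m := by
  induction n, h using Nat.le_induction with
  | base => exact Nat.mod_eq_of_lt (D.value_lt_place α m)
  | succ n hmn ih =>
    obtain ⟨c, hc⟩ := D.place_dvd_place hmn
    rw [value_succ, hc, ← mul_assoc, mul_comm _ (D.place m), mul_assoc, Nat.add_mul_mod_self_left,
      ih]

lemma ofNat_value (α : D.Sigma) {m n : ℕ} (h : m < n) : D.ofNat (D.value α n) m = α m := by
  ext
  show D.value α n / D.place m % D.p m = α m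
  rw [← Nat.mod_mul_right_div_self, ← place_succ, D.value_mod_place α h, value_succ,
    Nat.add_mul_div_right _ _ (D.place_pos m), Nat.div_eq_of_lt (D.value_lt_place α m), zero_add]

lemma ofNat_mod {v M m : ℕ} (h : D.place (m + 1) ∣ M) : D.ofNat (v % M) m = D.ofNat v m := by
  ext
  show v % M / D.place m % D.p m = v / D.place m % D.p m
  rw [← Nat.mod_mul_right_div_self, ← Nat.mod_mul_right_div_self v, ← place_succ,
    Nat.mod_mod_of_dvd _ h]

lemma eq_of_value_eq {α β : D.Sigma} {N : ℕ → ℕ} (hN : StrictMono N)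
    (h : ∀ k, D.value α (N k) = D.value β (N k)) : α = β := by
  funext m
  have hm : m < N (m + 1) := m.lt_succ_self.trans_le (hN.id_le _)
  rw [← D.ofNat_value α hm, h, D.ofNat_value β hm]

lemma carryIn_le_one (α : D.Sigma) (n : ℕ) : D.carryIn α n ≤ 1 := by
  cases n with
  | zero => simp [carryIn]
  | succ n => unfold carryIn; split <;> omega

lemma addOne_add_carryIn (α : D.Sigma) (n : ℕ) :
    (D.addOne α n : ℕ) + D.carryIn α (n + 1) * D.p n = α n + D.carryIn α n := by
  have := (α n).isLt
  have := D.carryIn_le_one α n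
  show ((α n : ℕ) + D.carryIn α n) % D.p n +
      (if D.p n ≤ (α n : ℕ) + D.carryIn α n then 1 else 0) * D.p n = _
  split_ifs with h
  · rw [Nat.mod_eq_sub_mod h, Nat.mod_eq_of_lt (by omega)]
    omega
  · rw [Nat.mod_eq_of_lt (by omega)]
    omega

lemma value_addOne (α : D.Sigma) (n : ℕ) :
    D.value (D.addOne α) n = (D.value α n + 1) % D.place n := by
  have key : D.value (D.addOne α) n + D.carryIn α n * D.place n = D.value α n + 1 := by
    induction n with
    | zero => simp [value, place, carryIn]
    | succ n ih =>
      rw [value_succ, value_succ, place_succ]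
      nlinarith [D.addOne_add_carryIn α n]
  rw [← key, Nat.add_mul_mod_self_right, Nat.mod_eq_of_lt (D.value_lt_place _ n)]

lemma continuous_value (n : ℕ) : Continuous fun α : D.Sigma => D.value α n := by
  unfold value
  fun_prop

end Odometer

section Regroup

/-- Block `k` of levels is `[blockStart t k, t k]`, so that `t k` is its top level. -/
def blockStart (t : ℕ → ℕ) : ℕ → ℕ
  | 0 => 0
  | k + 1 => t k + 1

variable {t : ℕ → ℕ}

lemma blockStart_le (ht : StrictMono t) (k : ℕ) : blockStart t k ≤ t k := by
  cases k with
  | zero => exact Nat.zero_le _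
  | succ k => exact ht k.lt_succ_self

lemma blockStart_strictMono (ht : StrictMono t) : StrictMono (blockStart t) :=
  strictMono_nat_of_lt_succ fun k => (blockStart_le ht k).trans_lt (t k).lt_succ_self

lemma not_of_mem_Ico_blockStart_nth {P : ℕ → Prop} {k m : ℕ}
    (hm : m ∈ Ico (blockStart (Nat.nth P) k) (Nat.nth P k)) : ¬P m := fun hP => by
  cases k with
  | zero => exact (Nat.nth_zero (p := P) ▸ hm.2).not_ge (Nat.sInf_le hP)
  | succ k => exact (Nat.le_nth_of_lt_nth_succ hm.2 hP).not_gt hm.1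

/-- The place value of the top level `t k` inside block `k`. -/
def topPlace (t : ℕ → ℕ) (k : ℕ) : ℕ := ∏ m ∈ Finset.Ico (blockStart t k) (t k), D.p m

lemma topPlace_pos (k : ℕ) : 0 < D.topPlace t k :=
  Finset.prod_pos fun m _ => by have := D.hp m; omega

lemma place_mul_topPlace (ht : StrictMono t) (k : ℕ) :
    D.place (blockStart t k) * D.topPlace t k = D.place (t k) :=
  Finset.prod_range_mul_prod_Ico _ (blockStart_le ht k)

/-- The data obtained by merging each block of levels into a single level, whose digit is the
block's value and whose map is the map of the block's top digit. -/
def regroup (t : ℕ → ℕ) : FAData where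
  p k := D.topPlace t k * D.p (t k)
  hp k := by nlinarith [D.topPlace_pos (t := t) k, D.hp (t k)]
  lam k J := D.lam (t k) ⟨J / D.topPlace t k,
    (Nat.div_lt_iff_lt_mul (D.topPlace_pos k)).2 (mul_comm (D.topPlace t k) _ ▸ J.isLt)⟩
  hlam _ _ := D.hlam _ _

lemma place_regroup (ht : StrictMono t) (k : ℕ) :
    (D.regroup t).place k = D.place (blockStart t k) := by
  induction k with
  | zero => rfl
  | succ k ih =>
    rw [place_succ, ih]
    show _ * (D.topPlace t k * D.p (t k)) = D.place (t k + 1)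
    rw [place_succ, ← mul_assoc, D.place_mul_topPlace ht]

def ungroup (t : ℕ → ℕ) (β : (D.regroup t).Sigma) : D.Sigma :=
  fun m => D.ofNat ((D.regroup t).value β (m + 1)) m

def group (t : ℕ → ℕ) (α : D.Sigma) : (D.regroup t).Sigma :=
  fun k => (D.regroup t).ofNat (D.value α (blockStart t (k + 1))) k

lemma ungroup_apply_of_lt (ht : StrictMono t) (β : (D.regroup t).Sigma) {m k : ℕ}
    (hm : m < blockStart t k) : D.ungroup t β m = D.ofNat ((D.regroup t).value β k) m := by
  have hdvd : ∀ {k}, m < blockStart t k → D.place (m + 1) ∣ (D.regroup t).place k := fun h => by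
    rw [D.place_regroup ht]; exact D.place_dvd_place h
  have h₁ : m < blockStart t (m + 1) := m.lt_succ_self.trans_le ((blockStart_strictMono ht).id_le _)
  rw [ungroup, ← (D.regroup t).value_mod_place β (le_max_left (m + 1) k), D.ofNat_mod (hdvd h₁),
    ← (D.regroup t).value_mod_place β (le_max_right (m + 1) k), D.ofNat_mod (hdvd hm)]

lemma group_apply_of_lt (ht : StrictMono t) (α : D.Sigma) {k' k : ℕ} (hk : k' < k) :
    D.group t α k' = (D.regroup t).ofNat (D.value α (blockStart t k)) k' := by
  rw [group, ← D.value_mod_place α ((blockStart_strictMono ht).monotone hk), ← D.place_regroup ht,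
    (D.regroup t).ofNat_mod dvd_rfl]

lemma value_ungroup (ht : StrictMono t) (β : (D.regroup t).Sigma) (k : ℕ) :
    D.value (D.ungroup t β) (blockStart t k) = (D.regroup t).value β k := by
  rw [D.value_congr fun m hm => D.ungroup_apply_of_lt ht β hm, value_ofNat, ← D.place_regroup ht,
    Nat.mod_eq_of_lt ((D.regroup t).value_lt_place β k)]

lemma value_group (ht : StrictMono t) (α : D.Sigma) (k : ℕ) :
    (D.regroup t).value (D.group t α) k = D.value α (blockStart t k) := by
  rw [(D.regroup t).value_congr fun k' hk => D.group_apply_of_lt ht α hk, value_ofNat,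
    D.place_regroup ht, Nat.mod_eq_of_lt (D.value_lt_place α _)]

lemma ungroup_addOne (ht : StrictMono t) (β : (D.regroup t).Sigma) :
    D.ungroup t ((D.regroup t).addOne β) = D.addOne (D.ungroup t β) :=
  D.eq_of_value_eq (blockStart_strictMono ht) fun k => by
    rw [D.value_ungroup ht, value_addOne, value_addOne, D.value_ungroup ht, D.place_regroup ht]

def ungroupHomeomorph (ht : StrictMono t) : (D.regroup t).Sigma ≃ₜ D.Sigma where
  toFun := D.ungroup t
  invFun := D.group t
  left_inv β := (D.regroup t).eq_of_value_eq strictMono_id fun k => by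
    rw [D.value_group ht, D.value_ungroup ht]
  right_inv α := D.eq_of_value_eq (blockStart_strictMono ht) fun k => by
    rw [D.value_ungroup ht, D.value_group ht]
  continuous_toFun := continuous_pi fun m =>
    (continuous_of_discreteTopology (f := fun v => D.ofNat v m)).comp
      ((D.regroup t).continuous_value (m + 1))
  continuous_invFun := continuous_pi fun k =>
    (continuous_of_discreteTopology (f := fun v => (D.regroup t).ofNat v k)).comp
      (D.continuous_value _)

lemma regroup_lam_apply (ht : StrictMono t) (β : (D.regroup t).Sigma) (k : ℕ) :
    (D.regroup t).lam k (β k) = D.lam (t k) (D.ungroup t β (t k)) := by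
  have hv := (D.regroup t).value_lt_place β k
  rw [D.place_regroup ht] at hv
  rw [D.ungroup_apply_of_lt ht β (show t k < blockStart t (k + 1) from (t k).lt_succ_self)]
  refine congrArg (D.lam (t k)) (Fin.ext ?_)
  show (β k : ℕ) / D.topPlace t k = (D.regroup t).value β (k + 1) / D.place (t k) % D.p (t k)
  rw [value_succ, D.place_regroup ht, ← D.place_mul_topPlace ht, ← Nat.div_div_eq_div_mul,
    Nat.add_mul_div_right _ _ (D.place_pos _), Nat.div_eq_of_lt hv, zero_add, Nat.mod_eq_of_lt]
  exact (Nat.div_lt_iff_lt_mul (D.topPlace_pos k)).2 (mul_comm (D.topPlace t k) _ ▸ (β k).isLt)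

lemma lamComp_regroup (ht : StrictMono t)
    (hfull : ∀ k, ∀ m ∈ Ico (blockStart t k) (t k), ∀ j, D.lam m j = lam1)
    (β : (D.regroup t).Sigma) (k : ℕ) :
    (D.regroup t).lamComp β k = D.lamComp (D.ungroup t β) (blockStart t k) := by
  induction k with
  | zero => rfl
  | succ k ih =>
    show (D.regroup t).lamComp β k ∘ (D.regroup t).lam k (β k) =
      D.lamComp (D.ungroup t β) (t k) ∘ D.lam (t k) (D.ungroup t β (t k))
    rw [ih, D.regroup_lam_apply ht,
      D.lamComp_eq_of_lam_eq_lam1 (blockStart_le ht k) fun m hm => hfull k m hm _]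

lemma limPt_ungroup (ht : StrictMono t)
    (hfull : ∀ k, ∀ m ∈ Ico (blockStart t k) (t k), ∀ j, D.lam m j = lam1)
    (β : (D.regroup t).Sigma) (z : ℝ) :
    D.limPt (D.ungroup t β) z = (D.regroup t).limPt β z := by
  refine tendsto_nhds_unique
    ((D.tendsto_limPt _ z).comp (blockStart_strictMono ht).tendsto_atTop) ?_
  have h := (D.regroup t).tendsto_limPt β z
  simp only [D.lamComp_regroup ht hfull] at h
  exact h

lemma exists_regroup_lam_eq (k : ℕ) (j : Fin (D.p (t k))) :
    ∃ J, (D.regroup t).lam k J = D.lam (t k) j :=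
  ⟨⟨j * D.topPlace t k, by
      rw [mul_comm]; exact Nat.mul_lt_mul_of_pos_left j.isLt (D.topPlace_pos k)⟩,
    congrArg (D.lam (t k)) (Fin.ext (Nat.mul_div_cancel _ (D.topPlace_pos k)))⟩

lemma regroup_lam_fin0 (k : ℕ) :
    (D.regroup t).lam k ((D.regroup t).fin0 k) = D.lam (t k) (D.fin0 (t k)) :=
  congrArg (D.lam (t k)) (Fin.ext (Nat.zero_div _))

lemma regroup_lam_finTop (k : ℕ) :
    (D.regroup t).lam k ((D.regroup t).finTop k) = D.lam (t k) (D.finTop (t k)) := by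
  refine congrArg (D.lam (t k)) (Fin.ext ?_)
  show (D.topPlace t k * D.p (t k) - 1) / D.topPlace t k = D.p (t k) - 1
  have hW := D.topPlace_pos (t := t) k
  obtain ⟨q, hq⟩ : ∃ q, D.p (t k) = q + 1 :=
    ⟨_, (Nat.sub_add_cancel (one_le_two.trans (D.hp (t k)))).symm⟩
  rw [hq, Nat.add_sub_cancel, mul_add_one, mul_comm]
  exact Nat.div_eq_of_lt_le (by omega) (by rw [add_one_mul]; omega)

lemma regroup_Q_nonempty {k : ℕ} (h : (D.Q (t k)).Nonempty) : ((D.regroup t).Q k).Nonempty :=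
  let ⟨j, hj⟩ := h
  let ⟨J, hJ⟩ := D.exists_regroup_lam_eq k j
  ⟨J, hJ.trans hj⟩

lemma regroup_Q_ne_univ {k : ℕ} (h : D.Q (t k) ≠ univ) : (D.regroup t).Q k ≠ univ := by
  obtain ⟨j, hj⟩ := (ne_univ_iff_exists_notMem _).1 h
  obtain ⟨J, hJ⟩ := D.exists_regroup_lam_eq k j
  exact (ne_univ_iff_exists_notMem _).2 ⟨J, fun hJ' => hj (hJ.symm.trans hJ')⟩

end Regroup

section FillFull

variable {s : Set ℕ}

open scoped Classical in
def fillFull (s : Set ℕ) : FAData where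
  p := D.p
  hp := D.hp
  lam n j := if n ∈ s then lam1 else D.lam n j
  hlam n j := by split_ifs; exacts [Or.inr (Or.inl rfl), D.hlam n j]

lemma fillFull_lam_of_notMem {n : ℕ} (h : n ∉ s) (j : Fin (D.p n)) :
    (D.fillFull s).lam n j = D.lam n j := if_neg h

lemma carryIn_fillFull (α : D.Sigma) : ∀ n, (D.fillFull s).carryIn α n = D.carryIn α n
  | 0 => rfl
  | n + 1 => by
    show (if D.p n ≤ (α n : ℕ) + (D.fillFull s).carryIn α n then 1 else 0) = _
    rw [carryIn_fillFull α n]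
    rfl

lemma fillFull_addOne (α : D.Sigma) : (D.fillFull s).addOne α = D.addOne α := by
  funext n
  show (D.fillFull s).modAdd n _ _ = D.modAdd n _ _
  rw [D.carryIn_fillFull]
  rfl

lemma infinite_fillFull (hs : s.Finite) (P : (ℝ → ℝ) → Prop) (j : ∀ n, Fin (D.p n))
    (h : {n | P (D.lam n (j n))}.Infinite) : {n | P ((D.fillFull s).lam n (j n))}.Infinite :=
  (h.sdiff hs).mono fun n hn => by
    simpa only [mem_ofPred_eq, D.fillFull_lam_of_notMem hn.2] using hn.1

lemma fillFull_Q_nonempty (n : ℕ) : ((D.fillFull {n | D.Q n = ∅}).Q n).Nonempty := by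
  by_cases h : D.Q n = ∅
  · exact ⟨D.fin0 n, if_pos h⟩
  · obtain ⟨j, hj⟩ := nonempty_iff_ne_empty.2 h
    exact ⟨j, (D.fillFull_lam_of_notMem h j).trans hj⟩

/-- `fillScale` and `fillShift` are the coefficients of the affine map sending
`(D.fillFull s).lamComp α E` to `D.lamComp α E`. -/
def fillScale (s : Set ℕ) (E : ℕ) (α : D.Sigma) : ℝ :=
  (D.lamComp α E 1 - D.lamComp α E 0) /
    ((D.fillFull s).lamComp α E 1 - (D.fillFull s).lamComp α E 0)

def fillShift (s : Set ℕ) (E : ℕ) (α : D.Sigma) : ℝ :=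
  D.lamComp α E 0 - D.fillScale s E α * (D.fillFull s).lamComp α E 0

lemma fillScale_pos (E : ℕ) (α : D.Sigma) : 0 < D.fillScale s E α :=
  div_pos (sub_pos.2 (D.lamComp_strictMono α E zero_lt_one))
    (sub_pos.2 ((D.fillFull s).lamComp_strictMono α E zero_lt_one))

lemma continuous_fillScale (E : ℕ) : Continuous (D.fillScale s E) :=
  ((D.continuous_lamComp E 1).sub (D.continuous_lamComp E 0)).div
    (((D.fillFull s).continuous_lamComp E 1).sub ((D.fillFull s).continuous_lamComp E 0))
    fun α => (sub_pos.2 ((D.fillFull s).lamComp_strictMono α E zero_lt_one)).ne'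

lemma continuous_fillShift (E : ℕ) : Continuous (D.fillShift s E) :=
  (D.continuous_lamComp E 0).sub
    ((D.continuous_fillScale E).mul ((D.fillFull s).continuous_lamComp E 0))

lemma lamComp_eq_fillScale_mul {E : ℕ} (hE : ∀ n ∈ s, n < E) (α : D.Sigma) {n : ℕ} (hn : E ≤ n)
    (z : ℝ) : D.lamComp α n z =
      D.fillScale s E α * (D.fillFull s).lamComp α n z + D.fillShift s E α := by
  induction n, hn using Nat.le_induction generalizing z with
  | base =>
    have := (sub_pos.2 ((D.fillFull s).lamComp_strictMono α E zero_lt_one)).ne'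
    rw [D.lamComp_apply_eq α E z, (D.fillFull s).lamComp_apply_eq α E z, fillShift, fillScale]
    field_simp
    ring
  | succ n hn ih =>
    show D.lamComp α n (D.lam n (α n) z) = _ * (D.fillFull s).lamComp α n
      ((D.fillFull s).lam n (α n) z) + _
    rw [ih, D.fillFull_lam_of_notMem fun h => (hE n h).not_ge hn]

lemma limPt_eq_fillScale_mul {E : ℕ} (hE : ∀ n ∈ s, n < E) (α : D.Sigma) (z : ℝ) :
    D.limPt α z = D.fillScale s E α * (D.fillFull s).limPt α z + D.fillShift s E α :=
  tendsto_nhds_unique (D.tendsto_limPt α z)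
    ((((D.fillFull s).tendsto_limPt α z).const_mul _).add_const _ |>.congr'
      (eventually_atTop.2 ⟨E, fun _ hn => (D.lamComp_eq_fillScale_mul hE α hn z).symm⟩))

end FillFull

end FAData

/-- An isomorphism of odometers carrying each fibre of `D'.X` affinely onto a fibre of `D.X`. -/
structure FiberAffineEquiv (D' D : FAData) where
  toHomeomorph : D'.Sigma ≃ₜ D.Sigma
  map_addOne : ∀ β, toHomeomorph (D'.addOne β) = D.addOne (toHomeomorph β)
  scale : D'.Sigma → ℝ
  shift : D'.Sigma → ℝ
  continuous_scale : Continuous scale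
  scale_ne_zero : ∀ β, scale β ≠ 0
  continuous_shift : Continuous shift
  limPt_apply : ∀ β z, D.limPt (toHomeomorph β) z = scale β * D'.limPt β z + shift β

namespace FiberAffineEquiv

variable {D' D : FAData} (e : FiberAffineEquiv D' D)

def homeomorphX : D'.X ≃ₜ D.X where
  toFun q := ⟨(e.toHomeomorph q.1.1, e.scale q.1.1 * q.1.2 + e.shift q.1.1), by
    obtain ⟨z, hz, hq⟩ := D'.mem_X_iff.1 q.2
    exact D.mem_X_iff.2 ⟨z, hz, by rw [e.limPt_apply, hq]⟩⟩
  invFun q := ⟨(e.toHomeomorph.symm q.1.1,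
      (q.1.2 - e.shift (e.toHomeomorph.symm q.1.1)) / e.scale (e.toHomeomorph.symm q.1.1)), by
    obtain ⟨z, hz, hq⟩ := D.mem_X_iff.1 q.2
    refine D'.mem_X_iff.2 ⟨z, hz, ?_⟩
    have := e.limPt_apply (e.toHomeomorph.symm q.1.1) z
    rw [Homeomorph.apply_symm_apply, hq] at this
    rw [this, add_sub_cancel_right, mul_div_cancel_left₀ _ (e.scale_ne_zero _)]⟩
  left_inv q := Subtype.ext <| Prod.ext (e.toHomeomorph.symm_apply_apply _) <| by
    simp [e.scale_ne_zero]
  right_inv q := Subtype.ext <| Prod.ext (e.toHomeomorph.apply_symm_apply _) <| by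
    simp only [mul_div_cancel₀ _ (e.scale_ne_zero _), sub_add_cancel]
  continuous_toFun := by
    have := e.continuous_scale
    have := e.continuous_shift
    fun_prop
  continuous_invFun := by
    have := e.continuous_scale
    have := e.continuous_shift
    exact ((by fun_prop : Continuous fun q : D.X => e.toHomeomorph.symm q.1.1).prodMk
      ((by fun_prop : Continuous fun q : D.X => q.1.2 - e.shift (e.toHomeomorph.symm q.1.1)).div
        (by fun_prop) fun _ => e.scale_ne_zero _)).subtype_mk _

lemma homeomorphX_limPt (β : D'.Sigma) {z : ℝ} (hz : z ∈ Icc (0 : ℝ) 1) :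
    e.homeomorphX ⟨_, D'.limPt_mem_X β hz⟩ =
      ⟨(e.toHomeomorph β, D.limPt (e.toHomeomorph β) z), D.limPt_mem_X _ hz⟩ :=
  Subtype.ext (Prod.ext rfl (e.limPt_apply β z).symm)

end FiberAffineEquiv

namespace FAData

variable (D : FAData)

def fillFullEquiv {s : Set ℕ} {E : ℕ} (hE : ∀ n ∈ s, n < E) :
    FiberAffineEquiv (D.fillFull s) D where
  toHomeomorph := Homeomorph.refl _
  map_addOne := D.fillFull_addOne
  scale := D.fillScale s E
  shift := D.fillShift s E
  continuous_scale := D.continuous_fillScale E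
  scale_ne_zero α := (D.fillScale_pos E α).ne'
  continuous_shift := D.continuous_fillShift E
  limPt_apply := D.limPt_eq_fillScale_mul hE

def regroupEquiv {t : ℕ → ℕ} (ht : StrictMono t)
    (hfull : ∀ k, ∀ m ∈ Ico (blockStart t k) (t k), ∀ j, D.lam m j = lam1) :
    FiberAffineEquiv (D.regroup t) D where
  toHomeomorph := D.ungroupHomeomorph ht
  map_addOne := D.ungroup_addOne ht
  scale _ := 1
  shift _ := 0
  continuous_scale := continuous_const
  scale_ne_zero _ := one_ne_zero
  continuous_shift := continuous_const
  limPt_apply β z := by rw [one_mul, add_zero]; exact D.limPt_ungroup ht hfull β z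

end FAData

namespace FASystem

variable (S : FASystem)

lemma T_limPt (α : S.Sigma) {z : ℝ} (hz : z ∈ Icc (0 : ℝ) 1) :
    S.T ⟨_, S.limPt_mem_X α hz⟩ = ⟨_, S.limPt_mem_X (S.addOne α) hz⟩ :=
  Subtype.ext <| S.hT α z _ _ hz (S.tendsto_limPt α z) (S.tendsto_limPt _ z) _

lemma T_homeomorphX {D' : FAData} (e : FiberAffineEquiv D' S.toFAData) (β : D'.Sigma) {z : ℝ}
    (hz : z ∈ Icc (0 : ℝ) 1) :
    S.T (e.homeomorphX ⟨_, D'.limPt_mem_X β hz⟩) =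
      e.homeomorphX ⟨_, D'.limPt_mem_X (D'.addOne β) hz⟩ := by
  rw [e.homeomorphX_limPt β hz, e.homeomorphX_limPt _ hz, S.T_limPt _ hz]
  simp only [e.map_addOne]

/-- Transporting `S.T` along `e.homeomorphX` gives the Floyd–Auslander map of `D'`. -/
def pullback {D' : FAData} (e : FiberAffineEquiv D' S.toFAData)
    (hL : {n | D'.lam n (D'.fin0 n) = lam0 ∨ D'.lam n (D'.fin0 n) = lam2}.Infinite)
    (hR : {n | D'.lam n (D'.finTop n) = lam0 ∨ D'.lam n (D'.finTop n) = lam2}.Infinite)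
    (hQ : {n | D'.Q n = ∅}.Finite) : FASystem where
  toFAData := D'
  T := e.homeomorphX.symm ∘ S.T ∘ e.homeomorphX
  hT α z y y' hz hy hy' hq := by
    obtain rfl := tendsto_nhds_unique hy (D'.tendsto_limPt α z)
    obtain rfl := tendsto_nhds_unique hy' (D'.tendsto_limPt _ z)
    simp only [Function.comp_apply, S.T_homeomorphX e α hz, Homeomorph.symm_apply_apply]
  infLeft := hL
  infRight := hR
  Qfin := hQ

lemma homeomorphX_pullback_T {D' : FAData} (e : FiberAffineEquiv D' S.toFAData) (hL hR hQ)
    (q : D'.X) : e.homeomorphX ((S.pullback e hL hR hQ).T q) = S.T (e.homeomorphX q) :=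
  e.homeomorphX.apply_symm_apply _

theorem exists_conj_Q_nonempty : ∃ S' : FASystem, (∀ n, (S'.Q n).Nonempty) ∧
    ∃ h : S'.X ≃ₜ S.X, ∀ q, h (S'.T q) = S.T (h q) := by
  obtain ⟨E, hE⟩ := S.Qfin.bddAbove
  have hQ := S.fillFull_Q_nonempty
  exact ⟨S.pullback (S.fillFullEquiv fun n hn => Nat.lt_succ_of_le (hE hn))
    (S.infinite_fillFull S.Qfin (fun f => f = lam0 ∨ f = lam2) S.fin0 S.infLeft)
    (S.infinite_fillFull S.Qfin (fun f => f = lam0 ∨ f = lam2) S.finTop S.infRight)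
    (finite_empty.subset fun n hn => (hQ n).ne_empty hn), hQ, _, S.homeomorphX_pullback_T _ _ _ _⟩

theorem exists_conj_standing (hQ : ∀ n, (S.Q n).Nonempty) : ∃ S' : FASystem,
    (∀ n, 1 ≤ (S'.Q n).ncard ∧ (S'.Q n).ncard < S'.p n) ∧
    ∃ h : S'.X ≃ₜ S.X, ∀ q, h (S'.T q) = S.T (h q) := by
  set t := Nat.nth fun n => S.Q n ≠ univ
  have hinf : {n | S.Q n ≠ univ}.Infinite :=
    S.infLeft.mono fun _ => S.Q_ne_univ_of_lam_ne_lam1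
  have ht : StrictMono t := Nat.nth_strictMono hinf
  have hrange : range t = {n | S.Q n ≠ univ} := Nat.range_nth_of_infinite hinf
  have hfull : ∀ k, ∀ m ∈ Ico (FAData.blockStart t k) (t k), ∀ j, S.lam m j = lam1 :=
    fun k m hm j => (not_not.1 (FAData.not_of_mem_Ico_blockStart_nth (P := fun n => S.Q n ≠ univ)
      hm) ▸ mem_univ j : j ∈ S.Q m)
  have hsub : ∀ j : ∀ n, Fin (S.p n), {n | S.lam n (j n) = lam0 ∨ S.lam n (j n) = lam2} ⊆
      range t := fun _ _ hn => hrange.ge (S.Q_ne_univ_of_lam_ne_lam1 hn)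
  have hQ' : ∀ k, ((S.regroup t).Q k).Nonempty := fun k => S.regroup_Q_nonempty (hQ (t k))
  refine ⟨S.pullback (S.regroupEquiv ht hfull) ?_ ?_
    (finite_empty.subset fun k hk => (hQ' k).ne_empty hk), fun k => ⟨?_, ?_⟩, _,
    S.homeomorphX_pullback_T _ _ _ _⟩
  · refine (S.infLeft.preimage (hsub _)).mono fun k hk => ?_
    simp only [mem_ofPred_eq, S.regroup_lam_fin0]
    exact hk
  · refine (S.infRight.preimage (hsub _)).mono fun k hk => ?_
    simp only [mem_ofPred_eq, S.regroup_lam_finTop]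
    exact hk
  · exact (ncard_pos (toFinite _)).2 (hQ' k)
  · have h := ncard_lt_card (S.regroup_Q_ne_univ (Nat.nth_mem_of_infinite hinf k))
    rwa [Nat.card_eq_fintype_card, Fintype.card_fin] at h

end FASystem

/-- Every Floyd–Auslander system is topologically conjugate to a
Floyd–Auslander system satisfying the standing assumption `1 ≤ |Q(n)| < p_n`. -/
theorem floyd_auslander_conjugate_to_standing_assumption (S : FASystem) :
    ∃ S' : FASystem,
      (∀ n, 1 ≤ (S'.toFAData.Q n).ncard ∧ (S'.toFAData.Q n).ncard < S'.toFAData.p n) ∧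
      ∃ h : ↥S'.toFAData.X ≃ₜ ↥S.toFAData.X, ∀ q, h (S'.T q) = S.T (h q) := by
  obtain ⟨S₁, hQ₁, h₁, hh₁⟩ := S.exists_conj_Q_nonempty
  obtain ⟨S₂, hQ₂, h₂, hh₂⟩ := S₁.exists_conj_standing hQ₁
  exact ⟨S₂, hQ₂, h₂.trans h₁, fun q => by simp only [Homeomorph.trans_apply, hh₂, hh₁]⟩
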